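/- arXiv:1508.02971 — 7 statements merged into one kernel-verified Lean document; each statement's English description precedes it below -/
import Mathlib

section
/- For every k ∈ (0, 1/2) and every y ∈ [0, 1], the Bernoulli reparameterized data-fit φ_{k,y} is convex on ℝ. -/
/-!
On `[k, 1 - k]` the data-fit is the Bernoulli negative log-likelihood
`-y log θ - (1 - y) log (1 - θ)`, whose derivative `(1 - y) / (1 - θ) - y / θ` increases when
`0 ≤ y ≤ 1`. Outside, the logit is replaced by its tangent line at `k`, resp. `1 - k`, which turns
the data-fit into the logistic loss `log (1 + eᵘ) - y u` of an increasing affine `u`; its derivative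
`(σ u - y) u'` increases too. Values and derivatives of the pieces agree at `k` and `1 - k`, so the
glued function is differentiable with monotone derivative, hence convex.
-/

open Real Set

theorem hasDerivAt_ite_le {F : Type*} [NormedAddCommGroup F] [NormedSpace ℝ F]
    {f g f' g' : ℝ → F} {a x : ℝ}
    (hf : x ≤ a → HasDerivAt f (f' x) x) (hg : a ≤ x → HasDerivAt g (g' x) x)
    (hfg : f a = g a) (hfg' : f' a = g' a) :
    HasDerivAt (fun t => if t ≤ a then f t else g t) (if x ≤ a then f' x else g' x) x := by
  rcases lt_trichotomy x a with hxa | rfl | hax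
  · rw [if_pos hxa.le]
    refine (hf hxa.le).congr_of_eventuallyEq ?_
    filter_upwards [Iio_mem_nhds hxa] with t ht using if_pos ht.le
  · rw [if_pos le_rfl]
    have hleft : HasDerivWithinAt (fun t => if t ≤ x then f t else g t) (f' x) (Iic x) x :=
      (hf le_rfl).hasDerivWithinAt.congr (fun t ht => if_pos ht) (if_pos le_rfl)
    have hright : HasDerivWithinAt (fun t => if t ≤ x then f t else g t) (f' x) (Ici x) x := by
      refine hfg' ▸ (hg le_rfl).hasDerivWithinAt.congr (fun t ht => ?_) (by rw [if_pos le_rfl, hfg])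
      rcases (mem_Ici.1 ht).eq_or_lt with rfl | hlt
      · rw [if_pos le_rfl, hfg]
      · exact if_neg hlt.not_ge
    simpa only [Iic_union_Ici, hasDerivWithinAt_univ] using hleft.union hright
  · rw [if_neg hax.not_ge]
    refine (hg hax.le).congr_of_eventuallyEq ?_
    filter_upwards [Ioi_mem_nhds hax] with t ht using if_neg (not_le.2 ht)

theorem MonotoneOn.ite_le {α β : Type*} [LinearOrder α] [Preorder β] {f g : α → β} {a : α}
    {s : Set α} [s.OrdConnected] (hf : MonotoneOn f (s ∩ Iic a)) (hg : MonotoneOn g (s ∩ Ici a))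
    (hfg : f a ≤ g a) : MonotoneOn (fun t => if t ≤ a then f t else g t) s := by
  intro x hx z hz hxz
  rcases le_or_gt z a with hza | haz
  · simp only [if_pos hza, if_pos (hxz.trans hza)]
    exact hf ⟨hx, hxz.trans hza⟩ ⟨hz, hza⟩ hxz
  rcases le_or_gt x a with hxa | hax
  · have ha : a ∈ s := Set.OrdConnected.out ‹_› hx hz ⟨hxa, haz.le⟩
    simp only [if_pos hxa, if_neg haz.not_ge]
    calc f x ≤ f a := hf ⟨hx, hxa⟩ ⟨ha, le_rfl⟩ hxa
      _ ≤ g a := hfg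
      _ ≤ g z := hg ⟨ha, le_rfl⟩ ⟨hz, haz.le⟩ haz.le
  · simp only [if_neg hax.not_ge, if_neg haz.not_ge]
    exact hg ⟨hx, hax.le⟩ ⟨hz, haz.le⟩ hxz

section Bernoulli

variable {p y θ : ℝ}

noncomputable def bernoulliNLL (y θ : ℝ) : ℝ := -log (1 - θ) - y * log (θ / (1 - θ))

noncomputable def bernoulliNLLDeriv (y θ : ℝ) : ℝ := (1 - y) / (1 - θ) - y / θ

/-- `log (1 + eᵘ) - y u` at `u = log (p / (1 - p)) + (θ - p) / (p (1 - p))`, the tangent line of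
the logit at `p`. -/
noncomputable def bernoulliNLLTangent (p y θ : ℝ) : ℝ :=
  log (1 + p / (1 - p) * exp ((θ - p) / (p * (1 - p))))
    - y * ((θ - p) / (p * (1 - p)) + log (p / (1 - p)))

/-- `log (1 + eᵘ) - y u` at `u = log (p / (1 - p)) + (θ - p) / (p (1 - p))`, the tangent line of
the logit at `p`. -/
noncomputable def bernoulliNLLTangentDeriv (p y θ : ℝ) : ℝ :=
  (p / (1 - p) * exp ((θ - p) / (p * (1 - p))) / (1 + p / (1 - p) * exp ((θ - p) / (p * (1 - p))))
    - y) / (p * (1 - p))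

theorem hasDerivAt_bernoulliNLL (hθ0 : 0 < θ) (hθ1 : θ < 1) :
    HasDerivAt (bernoulliNLL y) (bernoulliNLLDeriv y θ) θ := by
  have h1θ : 1 - θ ≠ 0 := by linarith
  have hsub : HasDerivAt (fun t => 1 - t) (-1) θ := by simpa using (hasDerivAt_id θ).const_sub 1
  have hlogit := ((hasDerivAt_id' θ).div hsub h1θ).log (div_ne_zero hθ0.ne' h1θ)
  refine ((hsub.log h1θ).neg.sub (hlogit.const_mul y)).congr_deriv ?_
  simp only [bernoulliNLLDeriv, Pi.div_apply]
  field_simp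
  ring

theorem monotoneOn_bernoulliNLLDeriv (hy0 : 0 ≤ y) (hy1 : y ≤ 1) :
    MonotoneOn (bernoulliNLLDeriv y) (Ioo 0 1) := by
  intro x hx z hz hxz
  have h1 : (1 - y) / (1 - x) ≤ (1 - y) / (1 - z) := by
    gcongr
    linarith [hz.2]
  have h2 : y / z ≤ y / x := by gcongr; exact hx.1
  simp only [bernoulliNLLDeriv]
  linarith

theorem hasDerivAt_bernoulliNLLTangent (hp0 : 0 < p) (hp1 : p < 1) :
    HasDerivAt (bernoulliNLLTangent p y) (bernoulliNLLTangentDeriv p y θ) θ := by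
  have hq : 0 < 1 - p := by linarith
  have hu : HasDerivAt (fun t => (t - p) / (p * (1 - p))) (1 / (p * (1 - p))) θ := by
    simpa using ((hasDerivAt_id θ).sub_const p).div_const (p * (1 - p))
  have hpos : 0 < 1 + p / (1 - p) * exp ((θ - p) / (p * (1 - p))) := by positivity
  have hlog := ((hu.exp.const_mul (p / (1 - p))).const_add 1).log hpos.ne'
  refine (hlog.sub ((hu.add_const (log (p / (1 - p)))).const_mul y)).congr_deriv ?_
  simp only [bernoulliNLLTangentDeriv]
  field_simp

theorem monotone_bernoulliNLLTangentDeriv (hp0 : 0 < p) (hp1 : p < 1) :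
    Monotone (bernoulliNLLTangentDeriv p y) := by
  have hq : 0 < 1 - p := by linarith
  intro x z hxz
  have hodds : p / (1 - p) * exp ((x - p) / (p * (1 - p)))
      ≤ p / (1 - p) * exp ((z - p) / (p * (1 - p))) := by gcongr
  have hfrac : ∀ {a b : ℝ}, 0 ≤ a → a ≤ b → a / (1 + a) ≤ b / (1 + b) := fun ha hab => by
    rw [div_le_div_iff₀ (by positivity) (by linarith)]; nlinarith
  unfold bernoulliNLLTangentDeriv
  gcongr (?_ - y) / _
  exact hfrac (by positivity) hodds

theorem bernoulliNLLTangent_self (hp1 : p ≠ 1) : bernoulliNLLTangent p y p = bernoulliNLL y p := by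
  have hq : 1 - p ≠ 0 := sub_ne_zero.2 hp1.symm
  have hodds : 1 + p / (1 - p) = (1 - p)⁻¹ := by field_simp; ring
  simp only [bernoulliNLLTangent, bernoulliNLL, sub_self, zero_div, exp_zero, mul_one, hodds,
    log_inv, zero_add]

theorem bernoulliNLLTangentDeriv_self (hp0 : p ≠ 0) (hp1 : p ≠ 1) :
    bernoulliNLLTangentDeriv p y p = bernoulliNLLDeriv y p := by
  have hq : 1 - p ≠ 0 := sub_ne_zero.2 hp1.symm
  simp only [bernoulliNLLTangentDeriv, bernoulliNLLDeriv, sub_self, zero_div, exp_zero, mul_one]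
  field_simp
  ring

end Bernoulli

section Reparam

variable {k y : ℝ}

noncomputable def bernoulliReparamNLL (k y θ : ℝ) : ℝ :=
  if θ ≤ k then bernoulliNLLTangent k y θ
  else if θ ≤ 1 - k then bernoulliNLL y θ else bernoulliNLLTangent (1 - k) y θ

noncomputable def bernoulliReparamNLLDeriv (k y θ : ℝ) : ℝ :=
  if θ ≤ k then bernoulliNLLTangentDeriv k y θ
  else if θ ≤ 1 - k then bernoulliNLLDeriv y θ else bernoulliNLLTangentDeriv (1 - k) y θ

theorem hasDerivAt_bernoulliReparamNLL (hk0 : 0 < k) (hk1 : k < 1 / 2) (θ : ℝ) :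
    HasDerivAt (bernoulliReparamNLL k y) (bernoulliReparamNLLDeriv k y θ) θ := by
  have hk : k < 1 - k := by linarith
  have hk' : 1 - k < 1 := by linarith
  unfold bernoulliReparamNLL bernoulliReparamNLLDeriv
  apply hasDerivAt_ite_le (fun _ => hasDerivAt_bernoulliNLLTangent hk0 (hk.trans hk'))
  · intro hkθ
    exact hasDerivAt_ite_le
      (fun hθ => hasDerivAt_bernoulliNLL (hk0.trans_le hkθ) (hθ.trans_lt hk'))
      (fun _ => hasDerivAt_bernoulliNLLTangent (hk0.trans hk) hk')
      (bernoulliNLLTangent_self hk'.ne).symm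
      (bernoulliNLLTangentDeriv_self (hk0.trans hk).ne' hk'.ne).symm
  · rw [if_pos hk.le, bernoulliNLLTangent_self (hk.trans hk').ne]
  · rw [if_pos hk.le, bernoulliNLLTangentDeriv_self hk0.ne' (hk.trans hk').ne]

theorem monotone_bernoulliReparamNLLDeriv (hk0 : 0 < k) (hk1 : k < 1 / 2) (hy0 : 0 ≤ y)
    (hy1 : y ≤ 1) : Monotone (bernoulliReparamNLLDeriv k y) := by
  have hk : k < 1 - k := by linarith
  have hk' : 1 - k < 1 := by linarith
  have hmiddle : MonotoneOn (fun θ => if θ ≤ 1 - k then bernoulliNLLDeriv y θ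
      else bernoulliNLLTangentDeriv (1 - k) y θ) (univ ∩ Ici k) :=
    MonotoneOn.ite_le
      ((monotoneOn_bernoulliNLLDeriv hy0 hy1).mono fun θ ⟨⟨_, hkθ⟩, hθ⟩ =>
        ⟨hk0.trans_le hkθ, hθ.trans_lt hk'⟩)
      ((monotone_bernoulliNLLTangentDeriv (hk0.trans hk) hk').monotoneOn _)
      (bernoulliNLLTangentDeriv_self (hk0.trans hk).ne' hk'.ne).ge
  rw [← monotoneOn_univ]
  refine ((monotone_bernoulliNLLTangentDeriv hk0 (hk.trans hk')).monotoneOn _).ite_le hmiddle ?_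
  rw [if_pos hk.le, bernoulliNLLTangentDeriv_self hk0.ne' (hk.trans hk').ne]

theorem convexOn_bernoulliReparamNLL (hk0 : 0 < k) (hk1 : k < 1 / 2) (hy0 : 0 ≤ y)
    (hy1 : y ≤ 1) : ConvexOn ℝ univ (bernoulliReparamNLL k y) := by
  have hderiv := hasDerivAt_bernoulliReparamNLL (y := y) hk0 hk1
  refine Monotone.convexOn_univ_of_deriv (fun θ => (hderiv θ).differentiableAt) ?_
  rw [show deriv (bernoulliReparamNLL k y) = _ from funext fun θ => (hderiv θ).deriv]
  exact monotone_bernoulliReparamNLLDeriv hk0 hk1 hy0 hy1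

end Reparam

/-- **Bernoulli reparameterized data-fit is convex.**
For every k ∈ (0, 1/2) and every y ∈ [0, 1], the Bernoulli reparameterized
data-fit φ_{k,y} is convex on ℝ. -/
theorem bernoulli_reparam_datafit_convex
    (k : ℝ) (hk0 : 0 < k) (hk1 : k < 1/2) (y : ℝ) (hy0 : 0 ≤ y) (hy1 : y ≤ 1) :
    ConvexOn ℝ Set.univ (fun θ : ℝ =>
      if θ ≤ k then
        Real.log (1 + (k / (1 - k)) * Real.exp ((θ - k) / (k * (1 - k))))
          - y * ((θ - k) / (k * (1 - k)) + Real.log (k / (1 - k)))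
      else if θ ≤ 1 - k then
        -Real.log (1 - θ) - y * Real.log (θ / (1 - θ))
      else
        Real.log (1 + ((1 - k) / k) * Real.exp ((θ + k - 1) / (k * (1 - k))))
          - y * ((θ + k - 1) / (k * (1 - k)) + Real.log ((1 - k) / k))) := by
  convert convexOn_bernoulliReparamNLL hk0 hk1 hy0 hy1 using 2 with θ
  simp only [bernoulliReparamNLL, bernoulliNLLTangent, bernoulliNLL, sub_sub_cancel,
    mul_comm (1 - k) k, sub_sub_eq_add_sub]
end

section
/- For every k ∈ (0, 1/2) and every y ∈ [0, 1], the Bernoulli reparameterized data-fit φ_{k,y} is differentiable on all of ℝ and there exists a constant L ≥ 0 such that the derivative of φ_{k,y} is Lipschitz continuous on ℝ with constant L. -/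
/-!
On `[k, 1 - k]` the data-fit is `ψ_y (logit θ)`, where `ψ_y t = log (1 + exp t) - y t` is the
Bernoulli negative log-likelihood in its natural parameter, and the two outer pieces are `ψ_y`
composed with the tangent lines of the logit at `k` and `1 - k`. Hence `φ_{k,y} = ψ_y ∘ s` with `s`
the logit extended affinely beyond `[k, 1 - k]`; `s` is `C¹` with `s' θ = 1 / (p (1 - p))`, `p` the
clamp of `θ` to `[k, 1 - k]`. So `φ' = (σ ∘ s - y) · s'` is a product of bounded Lipschitz
functions: `σ ∘ s - y` takes values in `[-1, 1]` because `y ∈ [0, 1]`, and `0 < s' ≤ 1 / (k (1 - k))`.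
-/

open Real Set

theorem HasDerivAt.ite_le {f g : ℝ → ℝ} {f' g' a x : ℝ}
    (hf : x ≤ a → HasDerivAt f f' x) (hg : a ≤ x → HasDerivAt g g' x)
    (ha : f a = g a) (ha' : x = a → f' = g') :
    HasDerivAt (fun z => if z ≤ a then f z else g z) (if x ≤ a then f' else g') x := by
  rcases lt_trichotomy x a with hxa | rfl | hax
  · rw [if_pos hxa.le]
    refine (hf hxa.le).congr_of_eventuallyEq ?_
    filter_upwards [Iio_mem_nhds hxa] with z hz
    rw [if_pos (le_of_lt hz)]
  · rw [if_pos le_rfl]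
    have hleft : HasDerivWithinAt (fun z => if z ≤ x then f z else g z) f' (Iic x) x :=
      (hf le_rfl).hasDerivWithinAt.congr (fun z hz => if_pos hz) (if_pos le_rfl)
    have hright : HasDerivWithinAt (fun z => if z ≤ x then f z else g z) f' (Ici x) x := by
      rw [ha' rfl]
      refine (hg le_rfl).hasDerivWithinAt.congr (fun z hz => ?_) (by rw [if_pos le_rfl, ha])
      split_ifs with h
      · rw [le_antisymm h hz, ha]
      · rfl
    simpa [Iic_union_Ici] using hleft.union hright
  · rw [if_neg hax.not_ge]
    refine (hg hax.le).congr_of_eventuallyEq ?_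
    filter_upwards [Ioi_mem_nhds hax] with z hz
    rw [if_neg (not_le_of_gt hz)]

theorem hasDerivAt_log_div_one_sub {θ : ℝ} (h0 : 0 < θ) (h1 : θ < 1) :
    HasDerivAt (fun θ => log (θ / (1 - θ))) (1 / (θ * (1 - θ))) θ := by
  have h1' : 0 < 1 - θ := sub_pos.2 h1
  have hdiv : HasDerivAt (fun θ => θ / (1 - θ)) ((1 * (1 - θ) - θ * -1) / (1 - θ) ^ 2) θ :=
    (hasDerivAt_id' θ).div ((hasDerivAt_id' θ).const_sub 1) h1'.ne'
  refine (hdiv.log (div_pos h0 h1').ne').congr_deriv ?_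
  field_simp
  ring

theorem abs_mul_sub_mul_le {f g : ℝ → ℝ} {A B Kf Kg : ℝ} (hfA : ∀ x, |f x| ≤ A)
    (hgB : ∀ x, |g x| ≤ B) (hf : ∀ a b, |f a - f b| ≤ Kf * |a - b|)
    (hg : ∀ a b, |g a - g b| ≤ Kg * |a - b|) (a b : ℝ) :
    |f a * g a - f b * g b| ≤ (A * Kg + B * Kf) * |a - b| :=
  calc |f a * g a - f b * g b| = |f a * (g a - g b) + g b * (f a - f b)| := by ring_nf
    _ ≤ |f a| * |g a - g b| + |g b| * |f a - f b| := by
      rw [← abs_mul, ← abs_mul]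
      exact abs_add_le _ _
    _ ≤ A * (Kg * |a - b|) + B * (Kf * |a - b|) := by
      gcongr
      · exact (abs_nonneg _).trans (hfA a)
      · exact hfA a
      · exact hg a b
      · exact (abs_nonneg _).trans (hgB b)
      · exact hgB b
      · exact hf a b
    _ = (A * Kg + B * Kf) * |a - b| := by ring

theorem abs_sigmoid_sub_sigmoid_le (a b : ℝ) : |sigmoid a - sigmoid b| ≤ 1 / 4 * |a - b| := by
  have := convex_univ.norm_image_sub_le_of_norm_hasDerivWithin_le (C := 1 / 4)
    (fun t _ => (hasDerivAt_sigmoid t).hasDerivWithinAt) (fun t _ => ?_) (mem_univ b) (mem_univ a)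
  · simpa only [Real.norm_eq_abs] using this
  · have h0 := sigmoid_pos t
    have h1 := sigmoid_lt_one t
    rw [Real.norm_eq_abs, abs_of_pos (by nlinarith)]
    nlinarith [sq_nonneg (sigmoid t - 1 / 2)]

noncomputable def softplusLoss (y t : ℝ) : ℝ := log (1 + exp t) - y * t

theorem hasDerivAt_softplusLoss (y t : ℝ) : HasDerivAt (softplusLoss y) (sigmoid t - y) t := by
  refine ((((hasDerivAt_exp t).const_add 1).log (by positivity)).sub
    ((hasDerivAt_id' t).const_mul y)).congr_deriv ?_
  rw [sigmoid_def, exp_neg]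
  field_simp
  ring

theorem mul_one_sub_le_mul_one_sub {k p : ℝ} (hp : p ∈ Icc k (1 - k)) :
    k * (1 - k) ≤ p * (1 - p) := by
  nlinarith [mul_nonneg (sub_nonneg.2 hp.1) (sub_nonneg.2 hp.2)]

theorem max_min_mem_Icc {α : Type*} [LinearOrder α] {a b : α} (hab : a ≤ b) (x : α) :
    max a (min x b) ∈ Icc a b :=
  ⟨le_max_left _ _, max_le hab (min_le_right _ _)⟩

noncomputable def logitExt (k θ : ℝ) : ℝ :=
  if θ ≤ k then (θ - k) / (k * (1 - k)) + log (k / (1 - k))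
  else if θ ≤ 1 - k then log (θ / (1 - θ))
  else (θ + k - 1) / (k * (1 - k)) + log ((1 - k) / k)

noncomputable def logitExtDeriv (k θ : ℝ) : ℝ :=
  1 / (max k (min θ (1 - k)) * (1 - max k (min θ (1 - k))))

section

variable {k : ℝ}

theorem hasDerivAt_logitExt (hk0 : 0 < k) (hk1 : k < 1 / 2) (θ : ℝ) :
    HasDerivAt (logitExt k) (logitExtDeriv k θ) θ := by
  have hk : k ≤ 1 - k := by linarith
  have hkk : 1 - (1 - k) = k := by ring
  have upper : k ≤ θ → HasDerivAt
      (fun θ => if θ ≤ 1 - k then log (θ / (1 - θ))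
        else (θ + k - 1) / (k * (1 - k)) + log ((1 - k) / k))
      (if θ ≤ 1 - k then 1 / (θ * (1 - θ)) else 1 / (k * (1 - k))) θ := fun hθ =>
    HasDerivAt.ite_le (fun h => hasDerivAt_log_div_one_sub (by linarith) (by linarith))
      (fun _ => ((((hasDerivAt_id' θ).add_const k).sub_const 1).div_const _).add_const _)
      (by rw [hkk]; ring_nf) (by rintro rfl; rw [hkk, mul_comm])
  have glued := HasDerivAt.ite_le
    (fun _ => (((hasDerivAt_id' θ).sub_const k).div_const (k * (1 - k))).add_const
      (log (k / (1 - k)))) upper (by rw [if_pos hk]; ring_nf) (by rintro rfl; rw [if_pos hk])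
  refine glued.congr_deriv ?_
  unfold logitExtDeriv
  split_ifs with h₁ h₂
  · rw [min_eq_left (h₁.trans hk), max_eq_left h₁]
  · rw [min_eq_left h₂, max_eq_right (le_of_not_ge h₁)]
  · rw [min_eq_right (le_of_not_ge h₂), max_eq_right hk, hkk, mul_comm]

theorem abs_logitExtDeriv_le (hk0 : 0 < k) (hk1 : k < 1 / 2) (θ : ℝ) :
    |logitExtDeriv k θ| ≤ 1 / (k * (1 - k)) := by
  have hc : 0 < k * (1 - k) := by nlinarith
  have hp := mul_one_sub_le_mul_one_sub (max_min_mem_Icc (by linarith) θ)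
  rw [logitExtDeriv, abs_of_pos (one_div_pos.2 (hc.trans_le hp))]
  exact one_div_le_one_div_of_le hc hp

theorem abs_logitExt_sub_le (hk0 : 0 < k) (hk1 : k < 1 / 2) (a b : ℝ) :
    |logitExt k a - logitExt k b| ≤ 1 / (k * (1 - k)) * |a - b| := by
  simpa only [Real.norm_eq_abs] using convex_univ.norm_image_sub_le_of_norm_hasDerivWithin_le
    (fun θ _ => (hasDerivAt_logitExt hk0 hk1 θ).hasDerivWithinAt)
    (fun θ _ => abs_logitExtDeriv_le hk0 hk1 θ) (mem_univ b) (mem_univ a)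

theorem abs_logitExtDeriv_sub_le (hk0 : 0 < k) (hk1 : k < 1 / 2) (a b : ℝ) :
    |logitExtDeriv k a - logitExtDeriv k b| ≤ 1 / (k * (1 - k)) ^ 2 * |a - b| := by
  have hc : 0 < k * (1 - k) := by nlinarith
  have hderiv : ∀ p ∈ Icc k (1 - k), HasDerivWithinAt (fun p => 1 / (p * (1 - p)))
      ((2 * p - 1) / (p * (1 - p)) ^ 2) (Icc k (1 - k)) p := fun p hp => by
    have hq : HasDerivAt (fun p => p * (1 - p)) (1 * (1 - p) + p * -1) p :=
      (hasDerivAt_id' p).mul ((hasDerivAt_id' p).const_sub 1)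
    refine ((hasDerivAt_const p 1).div hq (hc.trans_le (mul_one_sub_le_mul_one_sub hp)).ne')
      |>.hasDerivWithinAt.congr_deriv ?_
    ring
  have hbound : ∀ p ∈ Icc k (1 - k),
      ‖(2 * p - 1) / (p * (1 - p)) ^ 2‖ ≤ 1 / (k * (1 - k)) ^ 2 := fun p hp => by
    have hq := mul_one_sub_le_mul_one_sub hp
    have hslope : |2 * p - 1| ≤ 1 := abs_le.2 ⟨by linarith [hp.1], by linarith [hp.2]⟩
    rw [Real.norm_eq_abs, abs_div, abs_of_nonneg (sq_nonneg (p * (1 - p)))]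
    calc |2 * p - 1| / (p * (1 - p)) ^ 2 ≤ 1 / (p * (1 - p)) ^ 2 :=
          div_le_div_of_nonneg_right hslope (sq_nonneg _)
      _ ≤ 1 / (k * (1 - k)) ^ 2 := one_div_le_one_div_of_le (by positivity) (by gcongr)
  have hclamp := max_min_mem_Icc (show k ≤ 1 - k by linarith)
  calc |logitExtDeriv k a - logitExtDeriv k b|
      ≤ 1 / (k * (1 - k)) ^ 2 * |max k (min a (1 - k)) - max k (min b (1 - k))| := by
        simpa only [logitExtDeriv, Real.norm_eq_abs] using
          (convex_Icc k (1 - k)).norm_image_sub_le_of_norm_hasDerivWithin_le hderiv hbound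
            (hclamp b) (hclamp a)
    _ ≤ 1 / (k * (1 - k)) ^ 2 * |a - b| := by
        refine mul_le_mul_of_nonneg_left ?_ (by positivity)
        simpa [Real.dist_eq] using
          ((LipschitzWith.id.min_const (1 - k)).const_max k).dist_le_mul a b

theorem datafit_eq_softplusLoss_comp_logitExt (hk0 : 0 < k) (hk1 : k < 1 / 2) (y : ℝ) :
    (fun θ : ℝ =>
      if θ ≤ k then
        Real.log (1 + (k / (1 - k)) * Real.exp ((θ - k) / (k * (1 - k))))
          - y * ((θ - k) / (k * (1 - k)) + Real.log (k / (1 - k)))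
      else if θ ≤ 1 - k then
        -Real.log (1 - θ) - y * Real.log (θ / (1 - θ))
      else
        Real.log (1 + ((1 - k) / k) * Real.exp ((θ + k - 1) / (k * (1 - k))))
          - y * ((θ + k - 1) / (k * (1 - k)) + Real.log ((1 - k) / k))) =
      softplusLoss y ∘ logitExt k := by
  have h1k : 0 < 1 - k := by linarith
  funext θ
  simp only [Function.comp, softplusLoss, logitExt]
  split_ifs with hθk hθ1
  · rw [exp_add, exp_log (div_pos hk0 h1k), mul_comm]
  · have hθ : 0 < 1 - θ := by linarith
    have hodds : 1 + θ / (1 - θ) = (1 - θ)⁻¹ := by field_simp; ring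
    rw [exp_log (div_pos (by linarith) hθ), hodds, log_inv]
  · rw [exp_add, exp_log (div_pos h1k hk0), mul_comm]

theorem hasDerivAt_softplusLoss_comp_logitExt (hk0 : 0 < k) (hk1 : k < 1 / 2) (y θ : ℝ) :
    HasDerivAt (softplusLoss y ∘ logitExt k)
      ((sigmoid (logitExt k θ) - y) * logitExtDeriv k θ) θ :=
  (hasDerivAt_softplusLoss y _).comp θ (hasDerivAt_logitExt hk0 hk1 θ)

theorem abs_deriv_softplusLoss_comp_logitExt_sub_le (hk0 : 0 < k) (hk1 : k < 1 / 2) {y : ℝ}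
    (hy0 : 0 ≤ y) (hy1 : y ≤ 1) (a b : ℝ) :
    |(sigmoid (logitExt k a) - y) * logitExtDeriv k a -
        (sigmoid (logitExt k b) - y) * logitExtDeriv k b| ≤
      5 / (4 * (k * (1 - k)) ^ 2) * |a - b| := by
  have hresidual : ∀ θ, |sigmoid (logitExt k θ) - y| ≤ 1 := fun θ =>
    abs_le.2 ⟨by linarith [sigmoid_nonneg (logitExt k θ)],
      by linarith [sigmoid_le_one (logitExt k θ)]⟩
  have hlip : ∀ a b, |(sigmoid (logitExt k a) - y) - (sigmoid (logitExt k b) - y)| ≤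
      1 / 4 * (1 / (k * (1 - k))) * |a - b| := fun a b => by
    rw [sub_sub_sub_cancel_right, mul_assoc]
    exact (abs_sigmoid_sub_sigmoid_le _ _).trans
      (mul_le_mul_of_nonneg_left (abs_logitExt_sub_le hk0 hk1 a b) (by norm_num))
  refine (abs_mul_sub_mul_le hresidual (abs_logitExtDeriv_le hk0 hk1) hlip
    (abs_logitExtDeriv_sub_le hk0 hk1) a b).trans_eq ?_
  generalize k * (1 - k) = c
  ring

end

/-- **Bernoulli reparameterized data-fit is smooth with Lipschitz gradient.**
For every k ∈ (0, 1/2) and every y ∈ [0, 1], the Bernoulli reparameterized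
data-fit φ_{k,y} is differentiable on all of ℝ and its derivative is Lipschitz
continuous on ℝ with some constant L ≥ 0. -/
theorem bernoulli_reparam_datafit_smooth
    (k : ℝ) (hk0 : 0 < k) (hk1 : k < 1/2) (y : ℝ) (hy0 : 0 ≤ y) (hy1 : y ≤ 1) :
    Differentiable ℝ (fun θ : ℝ =>
      if θ ≤ k then
        Real.log (1 + (k / (1 - k)) * Real.exp ((θ - k) / (k * (1 - k))))
          - y * ((θ - k) / (k * (1 - k)) + Real.log (k / (1 - k)))
      else if θ ≤ 1 - k then
        -Real.log (1 - θ) - y * Real.log (θ / (1 - θ))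
      else
        Real.log (1 + ((1 - k) / k) * Real.exp ((θ + k - 1) / (k * (1 - k))))
          - y * ((θ + k - 1) / (k * (1 - k)) + Real.log ((1 - k) / k))) ∧
    ∃ L : ℝ, 0 ≤ L ∧ ∀ a b : ℝ,
      |deriv (fun θ : ℝ =>
        if θ ≤ k then
          Real.log (1 + (k / (1 - k)) * Real.exp ((θ - k) / (k * (1 - k))))
            - y * ((θ - k) / (k * (1 - k)) + Real.log (k / (1 - k)))
        else if θ ≤ 1 - k then
          -Real.log (1 - θ) - y * Real.log (θ / (1 - θ))
        else
          Real.log (1 + ((1 - k) / k) * Real.exp ((θ + k - 1) / (k * (1 - k))))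
            - y * ((θ + k - 1) / (k * (1 - k)) + Real.log ((1 - k) / k))) a
       - deriv (fun θ : ℝ =>
        if θ ≤ k then
          Real.log (1 + (k / (1 - k)) * Real.exp ((θ - k) / (k * (1 - k))))
            - y * ((θ - k) / (k * (1 - k)) + Real.log (k / (1 - k)))
        else if θ ≤ 1 - k then
          -Real.log (1 - θ) - y * Real.log (θ / (1 - θ))
        else
          Real.log (1 + ((1 - k) / k) * Real.exp ((θ + k - 1) / (k * (1 - k))))
            - y * ((θ + k - 1) / (k * (1 - k)) + Real.log ((1 - k) / k))) b|
      ≤ L * |a - b| := by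
  rw [datafit_eq_softplusLoss_comp_logitExt hk0 hk1 y]
  have hderiv := hasDerivAt_softplusLoss_comp_logitExt hk0 hk1 y
  refine ⟨fun θ => (hderiv θ).differentiableAt, 5 / (4 * (k * (1 - k)) ^ 2), by positivity,
    fun a b => ?_⟩
  rw [(hderiv a).deriv, (hderiv b).deriv]
  exact abs_deriv_softplusLoss_comp_logitExt_sub_le hk0 hk1 hy0 hy1 a b
end

section
/- For every k ∈ (0, 1/2), the Bernoulli reparameterization f_k is continuous on ℝ, strictly increasing on ℝ, and satisfies 0 < f_k(θ) < 1 for all θ ∈ ℝ. -/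
/-!
Each outer piece is a logistic curve `θ ↦ (1 + c e^{-θ/a + b})⁻¹` with `a, c > 0`, hence
continuous, strictly increasing and valued in `(0, 1)`. The constants are chosen so that the
lower curve equals `k` at `k` and the upper one equals `1 - k` at `1 - k`: the three pieces agree
at the breakpoints, and strictly monotone pieces glued continuously at a point form a strictly
monotone function.
-/

open Real Set

noncomputable def shiftedLogistic (a b c θ : ℝ) : ℝ :=
  (1 + c * exp (-θ / a + b))⁻¹

section ShiftedLogistic

variable {a b c : ℝ}

lemma one_add_mul_exp_pos (hc : 0 < c) (θ : ℝ) : 0 < 1 + c * exp (-θ / a + b) := by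
  positivity

lemma shiftedLogistic_pos (hc : 0 < c) (θ : ℝ) : 0 < shiftedLogistic a b c θ :=
  inv_pos.2 (one_add_mul_exp_pos hc θ)

lemma shiftedLogistic_lt_one (hc : 0 < c) (θ : ℝ) : shiftedLogistic a b c θ < 1 :=
  inv_lt_one_of_one_lt₀ (lt_add_of_pos_right 1 (by positivity))

lemma continuous_shiftedLogistic (hc : 0 < c) : Continuous (shiftedLogistic a b c) :=
  Continuous.inv₀ (by fun_prop) fun θ => (one_add_mul_exp_pos hc θ).ne'

lemma strictMono_shiftedLogistic (ha : 0 < a) (hc : 0 < c) :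
    StrictMono (shiftedLogistic a b c) := fun x y hxy => by
  apply inv_strictAnti₀ (one_add_mul_exp_pos hc y)
  gcongr

lemma shiftedLogistic_apply_self {p : ℝ} (hp : p ≠ 0) (hb : -p / a + b = 0)
    (hc : c = (1 - p) / p) : shiftedLogistic a b c p = p := by
  rw [shiftedLogistic, hb, exp_zero, mul_one, hc,
    show 1 + (1 - p) / p = p⁻¹ by field_simp; ring, inv_inv]

end ShiftedLogistic

lemma strictMono_ite_le {α β : Type*} [LinearOrder α] [Preorder β] {f g : α → β} {p : α}
    (hf : StrictMonoOn f (Iic p)) (hg : StrictMonoOn g (Ici p)) (hfg : f p = g p) :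
    StrictMono fun x => if x ≤ p then f x else g x := by
  refine StrictMonoOn.Iic_union_Ici (a := p) (hf.congr fun x hx => ?_) (hg.congr fun x hx => ?_)
  · exact (if_pos (mem_Iic.1 hx)).symm
  · rcases (mem_Ici.1 hx).eq_or_lt with rfl | hpx
    · simp only [le_refl, if_true, hfg]
    · exact (if_neg hpx.not_ge).symm

/-- **Properties of the Bernoulli reparameterization.**
For every k ∈ (0, 1/2), the Bernoulli reparameterization f_k is continuous,
strictly increasing, and takes values in (0, 1). -/
theorem bernoulli_reparam_properties
    (k : ℝ) (hk0 : 0 < k) (hk1 : k < 1/2) :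
    Continuous (fun θ : ℝ =>
      if θ ≤ k then
        (1 + ((1 - k) / k) * Real.exp (-θ / (k * (1 - k)) + 1 / (1 - k)))⁻¹
      else if θ ≤ 1 - k then θ
      else
        (1 + (k / (1 - k)) * Real.exp (-θ / (k * (1 - k)) + 1 / k))⁻¹) ∧
    StrictMono (fun θ : ℝ =>
      if θ ≤ k then
        (1 + ((1 - k) / k) * Real.exp (-θ / (k * (1 - k)) + 1 / (1 - k)))⁻¹
      else if θ ≤ 1 - k then θ
      else
        (1 + (k / (1 - k)) * Real.exp (-θ / (k * (1 - k)) + 1 / k))⁻¹) ∧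
    ∀ θ : ℝ,
      0 < (if θ ≤ k then
        (1 + ((1 - k) / k) * Real.exp (-θ / (k * (1 - k)) + 1 / (1 - k)))⁻¹
      else if θ ≤ 1 - k then θ
      else
        (1 + (k / (1 - k)) * Real.exp (-θ / (k * (1 - k)) + 1 / k))⁻¹) ∧
      (if θ ≤ k then
        (1 + ((1 - k) / k) * Real.exp (-θ / (k * (1 - k)) + 1 / (1 - k)))⁻¹
      else if θ ≤ 1 - k then θ
      else
        (1 + (k / (1 - k)) * Real.exp (-θ / (k * (1 - k)) + 1 / k))⁻¹) < 1 := by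
  have h1k : 0 < 1 - k := by linarith
  have hkk : k ≤ 1 - k := by linarith
  have ha : 0 < k * (1 - k) := by positivity
  have hcLow : 0 < (1 - k) / k := by positivity
  have hcHigh : 0 < k / (1 - k) := by positivity
  have hlow : shiftedLogistic (k * (1 - k)) (1 / (1 - k)) ((1 - k) / k) k = k :=
    shiftedLogistic_apply_self hk0.ne' (by field_simp; ring) rfl
  have hhigh : shiftedLogistic (k * (1 - k)) (1 / k) (k / (1 - k)) (1 - k) = 1 - k :=
    shiftedLogistic_apply_self h1k.ne' (by field_simp; ring) (by rw [sub_sub_cancel])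
  have hupper : StrictMono fun θ : ℝ => if θ ≤ 1 - k then θ else
      shiftedLogistic (k * (1 - k)) (1 / k) (k / (1 - k)) θ :=
    strictMono_ite_le (strictMono_id.strictMonoOn _)
      ((strictMono_shiftedLogistic ha hcHigh).strictMonoOn _) hhigh.symm
  refine ⟨?_, ?_, fun θ => ?_⟩
  · refine (continuous_shiftedLogistic hcLow).if_le ?_ continuous_id continuous_const
      fun x (hx : x = k) => by rw [hx]; exact hlow.trans (if_pos hkk).symm
    exact continuous_id.if_le (continuous_shiftedLogistic hcHigh) continuous_id continuous_const
      fun x (hx : x = 1 - k) => by rw [hx]; exact hhigh.symm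
  · exact strictMono_ite_le ((strictMono_shiftedLogistic ha hcLow).strictMonoOn _)
      (hupper.strictMonoOn _) (hlow.trans (if_pos hkk).symm)
  · split_ifs with hθk hθ
    · exact ⟨shiftedLogistic_pos hcLow θ, shiftedLogistic_lt_one hcLow θ⟩
    · constructor <;> linarith
    · exact ⟨shiftedLogistic_pos hcHigh θ, shiftedLogistic_lt_one hcHigh θ⟩
end

section
/- The function θ ↦ log(log(1 + exp θ)) is concave on ℝ. -/
open Real

private lemma one_add_exp_pos (θ : ℝ) : (0:ℝ) < 1 + Real.exp θ := by positivity

private lemma log_one_add_exp_pos (θ : ℝ) : 0 < Real.log (1 + Real.exp θ) :=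
  Real.log_pos (by linarith [Real.exp_pos θ])

private lemma hasDerivAt_f (θ : ℝ) :
    HasDerivAt (fun θ : ℝ => Real.log (Real.log (1 + Real.exp θ)))
      (Real.exp θ / ((1 + Real.exp θ) * Real.log (1 + Real.exp θ))) θ := by
  have h1 : HasDerivAt (fun θ : ℝ => 1 + Real.exp θ) (Real.exp θ) θ :=
    (Real.hasDerivAt_exp θ).const_add 1
  have h2 := h1.log (one_add_exp_pos θ).ne'
  have h3 := h2.log (log_one_add_exp_pos θ).ne'
  convert h3 using 1
  field_simp

private lemma hasDerivAt_f' (θ : ℝ) :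
    HasDerivAt (fun θ : ℝ => Real.exp θ / ((1 + Real.exp θ) * Real.log (1 + Real.exp θ)))
      ((Real.exp θ * ((1 + Real.exp θ) * Real.log (1 + Real.exp θ))
        - Real.exp θ * (Real.exp θ * Real.log (1 + Real.exp θ)
          + (1 + Real.exp θ) * (Real.exp θ / (1 + Real.exp θ))))
        / ((1 + Real.exp θ) * Real.log (1 + Real.exp θ))^2) θ := by
  have h1 : HasDerivAt (fun θ : ℝ => 1 + Real.exp θ) (Real.exp θ) θ :=
    (Real.hasDerivAt_exp θ).const_add 1
  have h2 := h1.log (one_add_exp_pos θ).ne'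
  have hv := h1.mul h2
  exact (Real.hasDerivAt_exp θ).div hv
    (mul_ne_zero (one_add_exp_pos θ).ne' (log_one_add_exp_pos θ).ne')

private lemma deriv_f_eq :
    deriv (fun θ : ℝ => Real.log (Real.log (1 + Real.exp θ)))
      = fun θ : ℝ => Real.exp θ / ((1 + Real.exp θ) * Real.log (1 + Real.exp θ)) := by
  funext θ; exact (hasDerivAt_f θ).deriv

/-- **Concavity of log(log(1 + exp θ)).**
The function θ ↦ log(log(1 + exp θ)) is concave on ℝ. -/
theorem log_log_one_add_exp_concave :
    ConcaveOn ℝ Set.univ (fun θ : ℝ => Real.log (Real.log (1 + Real.exp θ))) := by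
  apply concaveOn_univ_of_deriv2_nonpos
  · exact fun θ => (hasDerivAt_f θ).differentiableAt
  · rw [deriv_f_eq]
    exact fun θ => (hasDerivAt_f' θ).differentiableAt
  · intro θ
    have h := (hasDerivAt_f' θ).deriv
    simp only [Function.iterate_succ, Function.iterate_zero, Function.comp_apply, id]
    rw [deriv_f_eq, h]
    set e := Real.exp θ with he
    have hepos : 0 < e := Real.exp_pos θ
    have hL : 0 < Real.log (1 + e) := log_one_add_exp_pos θ
    have hle : Real.log (1 + e) ≤ e := by
      have := Real.log_le_sub_one_of_pos (one_add_exp_pos θ)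
      linarith
    apply div_nonpos_of_nonpos_of_nonneg
    · have h1e : (1:ℝ) + e ≠ 0 := (one_add_exp_pos θ).ne'
      have : e * ((1 + e) * Real.log (1 + e))
          - e * (e * Real.log (1 + e) + (1 + e) * (e / (1 + e)))
          = e * (Real.log (1 + e) - e) := by
        field_simp; ring
      rw [this]
      exact mul_nonpos_of_nonneg_of_nonpos hepos.le (by linarith)
    · positivity
end

section
/- For every k > 0 and every y ≥ 0, the Poisson log-exp reparameterized data-fit ψ_{k,y} is convex on ℝ. -/
/-!
Write `softplus θ = log (1 + exp θ)`. Since `log (k * softplus θ) = log k + log (softplus θ)`,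
the data-fit is `k • softplus - y • log ∘ softplus` up to a constant, so it suffices that
`softplus` is convex and log-concave. Its derivative is the sigmoid `σ`, with `σ' = σ (1 - σ)`,
so both reduce to sign conditions on second derivatives: `σ (1 - σ) ≥ 0`, and
`softplus * σ' ≤ σ ^ 2`, which after cancelling is `log (1 + exp θ) ≤ exp θ`.
-/

open Real Set

noncomputable def softplus (x : ℝ) : ℝ := log (1 + exp x)

lemma softplus_pos (x : ℝ) : 0 < softplus x :=
  log_pos (lt_add_of_pos_right 1 (exp_pos x))

lemma sigmoid_eq_exp_div (x : ℝ) : sigmoid x = exp x / (1 + exp x) := by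
  rw [sigmoid_def, exp_neg]
  field_simp
  ring

lemma hasDerivAt_softplus (x : ℝ) : HasDerivAt softplus (sigmoid x) x := by
  rw [sigmoid_eq_exp_div]
  exact ((hasDerivAt_exp x).const_add 1).log (by positivity)

lemma softplus_mul_one_sub_sigmoid_le_sigmoid (x : ℝ) :
    softplus x * (1 - sigmoid x) ≤ sigmoid x := by
  have hlog : softplus x ≤ exp x := by
    simpa [softplus] using log_le_sub_one_of_pos (by positivity : (0 : ℝ) < 1 + exp x)
  have hone_sub : 1 - sigmoid x = (1 + exp x)⁻¹ := by
    rw [sigmoid_eq_exp_div]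
    field_simp
    ring
  rw [hone_sub, sigmoid_eq_exp_div, div_eq_mul_inv]
  exact mul_le_mul_of_nonneg_right hlog (by positivity)

lemma convexOn_univ_of_hasDerivAt2_nonneg {f f' f'' : ℝ → ℝ}
    (hf : ∀ x, HasDerivAt f (f' x) x) (hf' : ∀ x, HasDerivAt f' (f'' x) x)
    (hf'' : ∀ x, 0 ≤ f'' x) : ConvexOn ℝ univ f :=
  convexOn_of_hasDerivWithinAt2_nonneg convex_univ
    (fun x _ => (hf x).continuousAt.continuousWithinAt)
    (fun x _ => (hf x).hasDerivWithinAt) (fun x _ => (hf' x).hasDerivWithinAt)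
    (fun x _ => hf'' x)

lemma convexOn_neg_log_of_hasDerivAt2 {f f' f'' : ℝ → ℝ}
    (hf : ∀ x, HasDerivAt f (f' x) x) (hf' : ∀ x, HasDerivAt f' (f'' x) x)
    (hpos : ∀ x, 0 < f x) (hle : ∀ x, f x * f'' x ≤ f' x ^ 2) :
    ConvexOn ℝ univ fun x => -log (f x) := by
  refine convexOn_univ_of_hasDerivAt2_nonneg (f' := fun x => -(f' x / f x))
    (f'' := fun x => (f' x ^ 2 - f x * f'' x) / f x ^ 2) (fun x => ?_) (fun x => ?_)
    (fun x => div_nonneg (sub_nonneg.mpr (hle x)) (sq_nonneg _))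
  · exact ((hf x).log (hpos x).ne').neg
  · exact ((hf' x).div (hf x) (hpos x).ne').neg.congr_deriv (by ring)

lemma convexOn_softplus : ConvexOn ℝ univ softplus :=
  convexOn_univ_of_hasDerivAt2_nonneg hasDerivAt_softplus hasDerivAt_sigmoid
    fun x => mul_nonneg (sigmoid_nonneg x) (sub_nonneg.mpr (sigmoid_le_one x))

lemma convexOn_neg_log_softplus : ConvexOn ℝ univ fun x => -log (softplus x) :=
  convexOn_neg_log_of_hasDerivAt2 hasDerivAt_softplus hasDerivAt_sigmoid softplus_pos
    fun x => by
      calc softplus x * (sigmoid x * (1 - sigmoid x))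
          = sigmoid x * (softplus x * (1 - sigmoid x)) := by ring
        _ ≤ sigmoid x * sigmoid x :=
          mul_le_mul_of_nonneg_left (softplus_mul_one_sub_sigmoid_le_sigmoid x)
            (sigmoid_nonneg x)
        _ = sigmoid x ^ 2 := (sq _).symm

/-- **Poisson log-exp reparameterized data-fit is convex.**
For every k > 0 and every y ≥ 0, the Poisson log-exp reparameterized data-fit
ψ_{k,y}(θ) = k·log(1 + exp θ) - y·log(k·log(1 + exp θ)) is convex on ℝ. -/
theorem poisson_logexp_datafit_convex
    (k : ℝ) (hk : 0 < k) (y : ℝ) (hy : 0 ≤ y) :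
    ConvexOn ℝ Set.univ (fun θ : ℝ =>
      k * Real.log (1 + Real.exp θ)
        - y * Real.log (k * Real.log (1 + Real.exp θ))) := by
  have hdecomp : (fun θ : ℝ => k * log (1 + exp θ) - y * log (k * log (1 + exp θ)))
      = fun θ => k • softplus θ + y • -log (softplus θ) + -(y * log k) := by
    funext θ
    rw [← softplus, log_mul hk.ne' (softplus_pos θ).ne', smul_eq_mul, smul_eq_mul]
    ring
  rw [hdecomp]
  exact ((convexOn_softplus.smul hk.le).add (convexOn_neg_log_softplus.smul hy)).add_const _
end

section
/- For every k > 0 and every y ≥ 0, the hybrid Poisson reparameterized data-fit χ_{k,y} is differentiable at every point of ℝ and its derivative is Lipschitz continuous on ℝ with constant max(k, y·k²). -/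
/-!
Both branches of χ_{k,y} are smooth, and at the switch point θ = 1/k they agree together with
their first derivatives (value 1/k + y log k, slope 1 - y k), so χ_{k,y} is differentiable with
derivative e^{kθ-1} - y k on the left and 1 - y/θ on the right. Since e^u is 1-Lipschitz for
u ≤ 0, the left derivative is k-Lipschitz; since |1/a - 1/b| ≤ k² |a - b| for a, b ≥ 1/k, the
right one is y k²-Lipschitz. Two Lipschitz pieces meeting at a point glue to a function that is
Lipschitz with the larger constant.
-/

open Real Set

theorem HasDerivAt.if_le {f₁ f₂ : ℝ → ℝ} {c d : ℝ} (h₁ : HasDerivAt f₁ d c)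
    (h₂ : HasDerivAt f₂ d c) (hc : f₁ c = f₂ c) :
    HasDerivAt (fun x => if x ≤ c then f₁ x else f₂ x) d c := by
  have hleft : HasDerivWithinAt (fun x => if x ≤ c then f₁ x else f₂ x) d (Iic c) c :=
    h₁.hasDerivWithinAt.congr (fun x hx => if_pos hx) (if_pos le_rfl)
  have hright : HasDerivWithinAt (fun x => if x ≤ c then f₁ x else f₂ x) d (Ici c) c := by
    refine h₂.hasDerivWithinAt.congr (fun x hx => ?_) (by simp [hc])
    rcases (mem_Ici.1 hx).eq_or_lt with rfl | hlt
    · simp [hc]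
    · exact if_neg hlt.not_ge
  simpa [Iic_union_Ici] using hleft.union hright

theorem hasDerivAt_if_le {f₁ f₂ f₁' f₂' : ℝ → ℝ} {c : ℝ}
    (h₁ : ∀ x ≤ c, HasDerivAt f₁ (f₁' x) x) (h₂ : ∀ x ≥ c, HasDerivAt f₂ (f₂' x) x)
    (hc : f₁ c = f₂ c) (hc' : f₁' c = f₂' c) (x : ℝ) :
    HasDerivAt (fun x => if x ≤ c then f₁ x else f₂ x) (if x ≤ c then f₁' x else f₂' x) x := by
  rcases lt_trichotomy x c with hx | rfl | hx
  · rw [if_pos hx.le]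
    refine (h₁ x hx.le).congr_of_eventuallyEq ?_
    filter_upwards [Iio_mem_nhds hx] with t ht using if_pos (le_of_lt ht)
  · rw [if_pos le_rfl]
    exact (h₁ x le_rfl).if_le (hc' ▸ h₂ x le_rfl) hc
  · rw [if_neg hx.not_ge]
    refine (h₂ x hx.le).congr_of_eventuallyEq ?_
    filter_upwards [Ioi_mem_nhds hx] with t ht using if_neg (not_le.2 ht)

theorem abs_sub_le_max_mul_of_Iic_Ici {g : ℝ → ℝ} {c K₁ K₂ : ℝ}
    (h₁ : ∀ a ≤ c, ∀ b ≤ c, |g a - g b| ≤ K₁ * |a - b|)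
    (h₂ : ∀ a ≥ c, ∀ b ≥ c, |g a - g b| ≤ K₂ * |a - b|) (a b : ℝ) :
    |g a - g b| ≤ max K₁ K₂ * |a - b| := by
  wlog hab : a ≤ b generalizing a b
  · rw [abs_sub_comm, abs_sub_comm a]
    exact this b a (le_of_not_ge hab)
  rcases le_total b c with hbc | hcb
  · exact (h₁ a (hab.trans hbc) b hbc).trans
      (mul_le_mul_of_nonneg_right (le_max_left _ _) (abs_nonneg _))
  rcases le_total c a with hca | hac
  · exact (h₂ a hca b hcb).trans
      (mul_le_mul_of_nonneg_right (le_max_right _ _) (abs_nonneg _))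
  calc |g a - g b| ≤ |g a - g c| + |g c - g b| := abs_sub_le _ _ _
    _ ≤ K₁ * |a - c| + K₂ * |c - b| := add_le_add (h₁ a hac c le_rfl) (h₂ c le_rfl b hcb)
    _ ≤ max K₁ K₂ * |a - c| + max K₁ K₂ * |c - b| := by gcongr <;> simp
    _ = max K₁ K₂ * |a - b| := by
      rw [abs_of_nonpos (sub_nonpos.2 hac), abs_of_nonpos (sub_nonpos.2 hcb),
        abs_of_nonpos (sub_nonpos.2 hab)]
      ring

theorem Real.abs_exp_sub_exp_le_of_nonpos {u v : ℝ} (hu : u ≤ 0) (hv : v ≤ 0) :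
    |exp u - exp v| ≤ |u - v| := by
  wlog hvu : v ≤ u generalizing u v
  · rw [abs_sub_comm, abs_sub_comm u]
    exact this hv hu (le_of_not_ge hvu)
  have hfactor : exp u - exp v = exp u * (1 - exp (v - u)) := by
    rw [mul_sub, mul_one, ← exp_add, add_sub_cancel]
  rw [abs_of_nonneg (sub_nonneg.2 (exp_le_exp.2 hvu)), abs_of_nonneg (sub_nonneg.2 hvu),
    hfactor]
  calc exp u * (1 - exp (v - u)) ≤ 1 - exp (v - u) :=
        mul_le_of_le_one_left (sub_nonneg.2 (exp_le_one_iff.2 (by linarith)))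
          (exp_le_one_iff.2 hu)
    _ ≤ u - v := by linarith [add_one_le_exp (v - u)]

theorem abs_inv_sub_inv_le {a b c : ℝ} (hc : 0 < c) (ha : c ≤ a) (hb : c ≤ b) :
    |a⁻¹ - b⁻¹| ≤ |a - b| / c ^ 2 := by
  have ha0 : 0 < a := hc.trans_le ha
  have hb0 : 0 < b := hc.trans_le hb
  rw [inv_sub_inv ha0.ne' hb0.ne', abs_div, abs_sub_comm, abs_of_pos (mul_pos ha0 hb0)]
  gcongr
  nlinarith

noncomputable def hybridPoissonFit (k y θ : ℝ) : ℝ :=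
  if θ ≤ 1 / k then (1 / k) * exp (k * θ - 1) - y * (k * θ - log k - 1) else θ - y * log θ

noncomputable def hybridPoissonFitDeriv (k y θ : ℝ) : ℝ :=
  if θ ≤ 1 / k then exp (k * θ - 1) - y * k else 1 - y / θ

theorem hasDerivAt_hybridPoissonFit {k : ℝ} (hk : 0 < k) (y θ : ℝ) :
    HasDerivAt (hybridPoissonFit k y) (hybridPoissonFitDeriv k y θ) θ := by
  have hkk : k * k⁻¹ = 1 := mul_inv_cancel₀ hk.ne'
  have hleft : ∀ x, HasDerivAt (fun x => (1 / k) * exp (k * x - 1) - y * (k * x - log k - 1))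
      (exp (k * x - 1) - y * k) x := fun x => by
    have hlin (b : ℝ) : HasDerivAt (fun x => k * x - b) k x := by
      simpa using ((hasDerivAt_id' x).const_mul k).sub_const b
    refine (((hlin 1).exp.const_mul (1 / k)).sub
      (((hlin (log k)).sub_const 1).const_mul y)).congr_deriv ?_
    field_simp
  have hright : ∀ x ≥ 1 / k, HasDerivAt (fun x => x - y * log x) (1 - y / x) x := fun x hx => by
    have hx0 : x ≠ 0 := ((one_div_pos.2 hk).trans_le hx).ne'
    exact ((hasDerivAt_id' x).sub ((hasDerivAt_log hx0).const_mul y)).congr_deriv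
      (by rw [div_eq_mul_inv])
  exact hasDerivAt_if_le (fun x _ => hleft x) hright (by simp [hkk, log_inv]) (by simp [hkk]) θ

theorem hybridPoissonFitDeriv_of_ge {k : ℝ} (hk : 0 < k) (y : ℝ) {θ : ℝ} (hθ : 1 / k ≤ θ) :
    hybridPoissonFitDeriv k y θ = 1 - y / θ := by
  rcases hθ.eq_or_lt with rfl | hlt
  · simp [hybridPoissonFitDeriv, mul_inv_cancel₀ hk.ne']
  · exact if_neg hlt.not_ge

theorem abs_hybridPoissonFitDeriv_sub_le_of_le {k : ℝ} (hk : 0 < k) (y : ℝ) {a b : ℝ}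
    (ha : a ≤ 1 / k) (hb : b ≤ 1 / k) :
    |hybridPoissonFitDeriv k y a - hybridPoissonFitDeriv k y b| ≤ k * |a - b| := by
  have hnonpos : ∀ x ≤ 1 / k, k * x - 1 ≤ 0 := fun x hx => by
    rw [le_div_iff₀ hk] at hx
    linarith
  calc |hybridPoissonFitDeriv k y a - hybridPoissonFitDeriv k y b|
      = |exp (k * a - 1) - exp (k * b - 1)| := by
        rw [hybridPoissonFitDeriv, hybridPoissonFitDeriv, if_pos ha, if_pos hb,
          sub_sub_sub_cancel_right]
    _ ≤ |(k * a - 1) - (k * b - 1)| :=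
        abs_exp_sub_exp_le_of_nonpos (hnonpos a ha) (hnonpos b hb)
    _ = k * |a - b| := by rw [sub_sub_sub_cancel_right, ← mul_sub, abs_mul, abs_of_pos hk]

theorem abs_hybridPoissonFitDeriv_sub_le_of_ge {k y : ℝ} (hk : 0 < k) (hy : 0 ≤ y) {a b : ℝ}
    (ha : 1 / k ≤ a) (hb : 1 / k ≤ b) :
    |hybridPoissonFitDeriv k y a - hybridPoissonFitDeriv k y b| ≤ y * k ^ 2 * |a - b| := by
  calc |hybridPoissonFitDeriv k y a - hybridPoissonFitDeriv k y b|
      = y * |a⁻¹ - b⁻¹| := by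
        rw [hybridPoissonFitDeriv_of_ge hk y ha, hybridPoissonFitDeriv_of_ge hk y hb,
          sub_sub_sub_cancel_left, div_eq_mul_inv, div_eq_mul_inv, ← mul_sub, abs_mul,
          abs_of_nonneg hy, abs_sub_comm]
    _ ≤ y * (|a - b| / (1 / k) ^ 2) := by gcongr; exact abs_inv_sub_inv_le (by positivity) ha hb
    _ = y * k ^ 2 * |a - b| := by field_simp

/-- **Hybrid Poisson reparameterized data-fit has a Lipschitz gradient.**
For every k > 0 and every y ≥ 0, χ_{k,y} is differentiable at every point of ℝ
and its derivative is Lipschitz continuous on ℝ with constant max(k, y·k²). -/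
theorem poisson_hybrid_datafit_lipschitz_grad
    (k : ℝ) (hk : 0 < k) (y : ℝ) (hy : 0 ≤ y) :
    Differentiable ℝ (fun θ : ℝ =>
      if θ ≤ 1 / k then
        (1 / k) * Real.exp (k * θ - 1) - y * (k * θ - Real.log k - 1)
      else θ - y * Real.log θ) ∧
    ∀ a b : ℝ,
      |deriv (fun θ : ℝ =>
        if θ ≤ 1 / k then
          (1 / k) * Real.exp (k * θ - 1) - y * (k * θ - Real.log k - 1)
        else θ - y * Real.log θ) a
       - deriv (fun θ : ℝ =>
        if θ ≤ 1 / k then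
          (1 / k) * Real.exp (k * θ - 1) - y * (k * θ - Real.log k - 1)
        else θ - y * Real.log θ) b|
      ≤ max k (y * k ^ 2) * |a - b| := by
  change Differentiable ℝ (hybridPoissonFit k y) ∧ ∀ a b : ℝ,
    |deriv (hybridPoissonFit k y) a - deriv (hybridPoissonFit k y) b| ≤ max k (y * k ^ 2) * |a - b|
  have hderiv := hasDerivAt_hybridPoissonFit hk y
  refine ⟨fun θ => (hderiv θ).differentiableAt, fun a b => ?_⟩
  rw [(hderiv a).deriv, (hderiv b).deriv]
  exact abs_sub_le_max_mul_of_Iic_Ici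
    (fun a ha b hb => abs_hybridPoissonFitDeriv_sub_le_of_le hk y ha hb)
    (fun a ha b hb => abs_hybridPoissonFitDeriv_sub_le_of_ge hk hy ha hb) a b
end

section
/- For every k > 0 and every y ≥ 0, the speckle (multiplicative Gamma noise) reparameterized data-fit γ_{k,y} is convex on ℝ. -/
/-- **Speckle reparameterized data-fit is convex.**
For every k > 0 and every y ≥ 0, the speckle (multiplicative Gamma noise)
reparameterized data-fit γ_{k,y} is convex on ℝ. -/
theorem speckle_reparam_datafit_convex
    (k : ℝ) (hk : 0 < k) (y : ℝ) (hy : 0 ≤ y) :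
    ConvexOn ℝ Set.univ (fun θ : ℝ =>
      if θ ≤ 0 then y * k * Real.exp θ - θ - Real.log k
      else y * k * (1 + θ) - Real.log (1 + θ) - Real.log k) := by
  set f : ℝ → ℝ := fun θ => if θ ≤ 0 then y * k * Real.exp θ - θ - Real.log k
      else y * k * (1 + θ) - Real.log (1 + θ) - Real.log k with hf
  set g : ℝ → ℝ := fun θ => if θ ≤ 0 then y * k * Real.exp θ - 1 else y * k - 1/(1+θ) with hg
  have hyk : 0 ≤ y * k := mul_nonneg hy hk.le
  have hd1 : ∀ x : ℝ, HasDerivAt (fun θ => y * k * Real.exp θ - θ - Real.log k)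
      (y * k * Real.exp x - 1) x := by
    intro x
    have h := ((Real.hasDerivAt_exp x).const_mul (y*k)).sub (hasDerivAt_id x)
    simpa using h.sub_const (Real.log k)
  have hd2 : ∀ x : ℝ, -1 < x → HasDerivAt (fun θ => y * k * (1 + θ) - Real.log (1 + θ) - Real.log k)
      (y * k - 1/(1+x)) x := by
    intro x hx
    have h1 : HasDerivAt (fun θ : ℝ => 1 + θ) 1 x := by
      simpa using (hasDerivAt_id x).const_add 1
    have h2 : HasDerivAt (fun θ : ℝ => Real.log (1 + θ)) (1/(1+x)) x := by
      simpa using h1.log (by linarith)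
    have h3 := ((h1.const_mul (y*k)).sub h2).sub_const (Real.log k)
    simpa [mul_comm] using h3
  have hderiv : ∀ x : ℝ, HasDerivAt f (g x) x := by
    intro x
    rcases lt_trichotomy x 0 with hx | hx | hx
    · have heq : f =ᶠ[nhds x] (fun θ => y * k * Real.exp θ - θ - Real.log k) := by
        filter_upwards [Iio_mem_nhds hx] with t ht
        simp [hf, (Set.mem_Iio.mp ht).le]
      have h := (hd1 x).congr_of_eventuallyEq heq
      simpa [hg, hx.le] using h
    · subst hx
      have hle : HasDerivWithinAt f (y * k * Real.exp 0 - 1) (Set.Iic 0) 0 := by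
        refine ((hd1 0).hasDerivWithinAt).congr ?_ ?_
        · intro t ht; simp [hf, Set.mem_Iic.mp ht]
        · simp [hf]
      have hge : HasDerivWithinAt f (y * k - 1/(1+0)) (Set.Ici 0) 0 := by
        refine ((hd2 0 (by norm_num)).hasDerivWithinAt).congr ?_ ?_
        · intro t ht
          rcases eq_or_lt_of_le (Set.mem_Ici.mp ht) with h | h
          · simp [hf, ← h]
          · simp [hf, not_le.mpr h]
        · simp [hf]
      have h0 : y * k * Real.exp 0 - 1 = y * k - 1/(1+0) := by simp
      rw [h0] at hle
      have h := hle.union hge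
      rw [Set.Iic_union_Ici] at h
      have h' := h.hasDerivAt (Filter.univ_mem)
      simpa [hg] using h'
    · have heq : f =ᶠ[nhds x] (fun θ => y * k * (1 + θ) - Real.log (1 + θ) - Real.log k) := by
        filter_upwards [Ioi_mem_nhds hx] with t ht
        simp [hf, not_le.mpr (Set.mem_Ioi.mp ht)]
      have h := (hd2 x (by linarith)).congr_of_eventuallyEq heq
      simpa [hg, not_le.mpr hx] using h
  have hmono : Monotone g := by
    intro a b hab
    simp only [hg]
    rcases le_or_gt a 0 with ha | ha
    · rcases le_or_gt b 0 with hb | hb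
      · simp only [if_pos ha, if_pos hb]
        have := Real.exp_le_exp.mpr hab
        nlinarith [Real.exp_pos a]
      · simp only [if_pos ha, if_neg (not_le.mpr hb)]
        have h1 : y * k * Real.exp a ≤ y * k := by
          have hea : Real.exp a ≤ 1 := Real.exp_le_one_iff.mpr ha
          nlinarith [Real.exp_pos a]
        have h2 : 1/(1+b) ≤ 1 := by
          rw [div_le_one (by linarith)]; linarith
        linarith
    · have hb : 0 < b := lt_of_lt_of_le ha hab
      simp only [if_neg (not_le.mpr ha), if_neg (not_le.mpr hb)]
      have h2 : 1/(1+b) ≤ 1/(1+a) := by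
        apply one_div_le_one_div_of_le (by linarith) (by linarith)
      linarith
  have hdiff : Differentiable ℝ f := fun x => (hderiv x).differentiableAt
  have hdf : deriv f = g := funext fun x => (hderiv x).deriv
  have := MonotoneOn.convexOn_of_deriv convex_univ hdiff.continuous.continuousOn
    (by rw [interior_univ]; exact hdiff.differentiableOn)
    (by rw [interior_univ, hdf]; exact hmono.monotoneOn _)
  exact this
end
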